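/- arXiv:1306.3056 — 10 statements merged into one kernel-verified Lean document; each statement's English description precedes it below -/
import Mathlib

section
/- For every infinite sequence (w_i)_{i ∈ ℕ} of words over a finite alphabet Σ, there exist indices l and k with l < k such that w_l is a (not necessarily contiguous) subsequence of w_k. -/
/-! Over a finite alphabet, equality of letters is a well-quasi-order, so by Higman's lemma for
`SublistForall₂` (embedding of words with letterwise comparison) the words are well-quasi-ordered
by it; for equality of letters that embedding is exactly the sublist relation. -/

theorem List.sublistForall₂_eq_eq_sublist {α : Type*} :
    SublistForall₂ (· = ·) = List.Sublist (α := α) := by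
  ext l₁ l₂
  rw [sublistForall₂_iff]
  constructor
  · rintro ⟨l, hl₁, hl⟩
    rw [forall₂_eq_eq_eq] at hl₁
    exact hl₁ ▸ hl
  · exact fun h => ⟨l₁, forall₂_refl l₁, h⟩

theorem List.partiallyWellOrderedOn_sublist {α : Type*} [Finite α] :
    (Set.univ : Set (List α)).PartiallyWellOrderedOn List.Sublist := by
  have hletters : (Set.univ : Set α).PartiallyWellOrderedOn (· = ·) :=
    Set.finite_univ.partiallyWellOrderedOn
  have hwords := hletters.partiallyWellOrderedOn_sublistForall₂ (· = ·)
  rw [sublistForall₂_eq_eq_sublist] at hwords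
  exact hwords.mono (fun l _ x _ => Set.mem_univ x)

/-- **Higman's Lemma.** For every infinite sequence of words over a finite alphabet,
there exist indices `l < k` such that the `l`-th word is a (scattered) subsequence
of the `k`-th word. -/
theorem higman_lemma (A : Type) [Fintype A] (w : ℕ → List A) :
    ∃ l k : ℕ, l < k ∧ (w l).Sublist (w k) :=
  List.partiallyWellOrderedOn_sublist.exists_lt (fun n => Set.mem_univ (w n))
end

section
/- For every finite set of colors C and natural numbers n and k, there exists a number R(C, n) such that every C-coloring of the edges of the complete k-uniform hypergraph on R(C, n) vertices contains a set of n vertices all of whose k-element subsets receive the same color. -/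
/-!
Infinite Ramsey first, by induction on `k`: choose a point `a` of an infinite set, apply the
statement for `k` to `e ↦ col (insert a e)` to get an infinite set beyond `a` on which this colour
is constant, and iterate. The resulting points `x₀, x₁, …` carry colours `c₀, c₁, …`; infinitely
many `cᵢ` agree, and on those points a `k + 1`-subset takes the colour of its first element.

The finite statement follows by compactness: if every `range R` had a counterexample `col R`, the
limit colouring `e ↦ lim_{R → 𝒰} col R e` along an ultrafilter `𝒰` has an infinite monochromatic
set; an `n`-element subset of it is monochromatic for the limit, hence for `col R` with `R` large.
-/

open Finset Function Filter

section Monochromatic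

variable {α β C : Type*}

def IsMonochromatic (col : Finset α → C) (k : ℕ) (T : Set α) (c : C) : Prop :=
  ∀ e : Finset α, ↑e ⊆ T → #e = k → col e = c

theorem IsMonochromatic.mono {col : Finset α → C} {k : ℕ} {T T' : Set α} {c : C}
    (h : IsMonochromatic col k T c) (hT : T' ⊆ T) : IsMonochromatic col k T' c :=
  fun e he hk => h e (he.trans hT) hk

theorem IsMonochromatic.preimage {col : Finset β → C} {k : ℕ} {T : Set β} {c : C}
    (h : IsMonochromatic col k T c) (f : α ↪ β) :
    IsMonochromatic (fun e => col (e.map f)) k (f ⁻¹' T) c := fun e he hk =>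
  h _ (by simpa [Set.image_subset_iff] using he) (by rw [card_map, hk])

theorem isMonochromatic_image_of_insert [DecidableEq α] {col : Finset α → C} {k : ℕ}
    {x : ℕ → α} {c : ℕ → C} (hx : Injective x)
    (hc : ∀ i, IsMonochromatic (fun e => col (insert (x i) e)) k (x '' Set.Ioi i) (c i))
    (c₀ : C) : IsMonochromatic col (k + 1) (x '' (c ⁻¹' {c₀})) c₀ := by
  intro e he hcard
  obtain ⟨s, hs, rfl⟩ := subset_set_image_iff.1 he
  rw [card_image_of_injective s hx] at hcard
  have hne : s.Nonempty := card_pos.1 (by omega)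
  have hmin := s.min'_mem hne
  have hrest : ↑((s.erase (s.min' hne)).image x) ⊆ x '' Set.Ioi (s.min' hne) := by
    rw [coe_image]
    exact Set.image_mono fun j hj => min'_lt_of_mem_erase_min' s hne hj
  have : col _ = _ := hc _ _ hrest <| by
    rw [card_image_of_injective _ hx, card_erase_of_mem hmin]; omega
  rwa [← image_insert, insert_erase hmin, (hs hmin : c _ = c₀)] at this

theorem exists_seq_isMonochromatic_insert [DecidableEq α] {k : ℕ}
    (ramsey : ∀ (col : Finset α → C) (S : Set α), S.Infinite →
      ∃ T ⊆ S, T.Infinite ∧ ∃ c, IsMonochromatic col k T c)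
    (col : Finset α → C) {S : Set α} (hS : S.Infinite) :
    ∃ (x : ℕ → α) (c : ℕ → C), Injective x ∧ Set.range x ⊆ S ∧
      ∀ i, IsMonochromatic (fun e => col (insert (x i) e)) k (x '' Set.Ioi i) (c i) := by
  have step : ∀ X : {X : Set α // X.Infinite}, ∃ Y : {Y : Set α // Y.Infinite}, ∃ a ∈ X.1,
      Y.1 ⊆ X.1 \ {a} ∧ ∃ c, IsMonochromatic (fun e => col (insert a e)) k Y.1 c := by
    rintro ⟨X, hX⟩
    obtain ⟨a, ha⟩ := hX.nonempty
    obtain ⟨Y, hYX, hY, c, hc⟩ :=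
      ramsey (fun e => col (insert a e)) _ (hX.sdiff (Set.finite_singleton a))
    exact ⟨⟨Y, hY⟩, a, ha, hYX, c, hc⟩
  choose next x hx hnext c hc using step
  let X : ℕ → {X : Set α // X.Infinite} := fun n => next^[n] ⟨S, hS⟩
  have hX_succ (n : ℕ) : X (n + 1) = next (X n) := iterate_succ_apply' ..
  have hX_anti : Antitone fun n => (X n).1 := antitone_nat_of_succ_le fun n => by
    rw [hX_succ]; exact (hnext _).trans Set.sdiff_subset
  have hlater (i : ℕ) : x ∘ X '' Set.Ioi i ⊆ (next (X i)).1 := by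
    rintro _ ⟨j, hij, rfl⟩
    exact hX_succ i ▸ hX_anti (Nat.succ_le_of_lt hij) (hx _)
  refine ⟨x ∘ X, c ∘ X, .of_lt_imp_ne fun i j hij => ?_, ?_, fun i => ?_⟩
  · exact ((hnext _ (hlater i ⟨j, hij, rfl⟩)).2 ·.symm)
  · rintro _ ⟨i, rfl⟩; exact hX_anti (Nat.zero_le i) (hx _)
  · exact (hc _).mono (hlater i)

theorem infinite_ramsey [Finite C] (k : ℕ) (col : Finset α → C) {S : Set α} (hS : S.Infinite) :
    ∃ T ⊆ S, T.Infinite ∧ ∃ c, IsMonochromatic col k T c := by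
  classical
  induction k generalizing col S with
  | zero =>
    exact ⟨S, subset_rfl, hS, col ∅, fun e _ he => by rw [card_eq_zero.1 he]⟩
  | succ k ih =>
    obtain ⟨x, c, hx, hxS, hc⟩ :=
      exists_seq_isMonochromatic_insert (fun col S hS => ih col hS) col hS
    obtain ⟨c₀, hc₀⟩ := Finite.exists_infinite_fiber c
    exact ⟨_, (Set.image_subset_range _ _).trans hxS,
      (Set.infinite_coe_iff.1 hc₀).image hx.injOn, c₀, isMonochromatic_image_of_insert hx hc c₀⟩

end Monochromatic

theorem exists_isMonochromatic_subset_range (C : Type*) [Finite C] (n k : ℕ) :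
    ∃ R, ∀ col : Finset ℕ → C, ∃ V ⊆ range R, #V = n ∧ ∃ c, IsMonochromatic col k V c := by
  by_contra! hbad
  choose col hcol using hbad
  let U := hyperfilter ℕ
  have hlim (e : Finset ℕ) : ∃ c, ∀ᶠ R in U, col R e = c :=
    Ultrafilter.eventually_exists_iff.1 (.of_forall fun R => ⟨_, rfl⟩)
  choose colU hcolU using hlim
  obtain ⟨T, -, hT, c, hc⟩ := infinite_ramsey k colU Set.infinite_univ
  obtain ⟨V, hVT, hV⟩ := hT.exists_subset_card_eq n
  have hlarge : ∀ᶠ R in U, V ⊆ range R := by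
    refine hyperfilter_le_cofinite (Nat.cofinite_eq_atTop ▸ ?_)
    exact eventually_ge_atTop _ |>.mono fun R hR => V.subset_range_sup_succ.trans (range_mono hR)
  have hagree : ∀ᶠ R in U, ∀ e ∈ V.powerset, col R e = colU e :=
    (eventually_all_finset V.powerset).2 fun e _ => hcolU e
  obtain ⟨R, hVR, hagreeR⟩ := (hlarge.and hagree).exists
  refine hcol R V hVR hV c fun e he hk => ?_
  rw [hagreeR e (mem_powerset.2 (coe_subset.1 he))]
  exact hc e (he.trans hVT) hk

/-- **Ramsey's theorem for hypergraphs.** For every finite set of colors `C` and naturals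
`n`, `k`, there is `R` such that every `C`-coloring of the `k`-element subsets of a set
of `R` vertices admits a set of `n` vertices all of whose `k`-element subsets get the
same color. -/
theorem hypergraph_ramsey (C : Type) [Fintype C] (n k : ℕ) :
    ∃ R : ℕ, ∀ col : {e : Finset (Fin R) // e.card = k} → C,
      ∃ V : Finset (Fin R), V.card = n ∧
        ∀ e e' : {e : Finset (Fin R) // e.card = k},
          (e : Finset (Fin R)) ⊆ V → (e' : Finset (Fin R)) ⊆ V → col e = col e' := by
  obtain ⟨R, hR⟩ := exists_isMonochromatic_subset_range C n k
  refine ⟨max R k, fun col => ?_⟩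
  let toNat (e : {e : Finset (Fin (max R k)) // #e = k}) : Finset ℕ := e.1.map Fin.valEmbedding
  have htoNat : Injective toNat := fun e e' h => Subtype.ext (map_injective _ h)
  -- `extend` needs a default colour and `C` may be empty: any `k`-subset of `Fin (max R k)`
  -- provides one.
  obtain ⟨e₀, -, he₀⟩ := exists_subset_card_eq (s := (univ : Finset (Fin (max R k)))) (n := k)
    (by simp)
  obtain ⟨V, hVR, hV, c, hc⟩ := hR (extend toNat col fun _ => col ⟨e₀, he₀⟩)
  have hVlt (m : ℕ) (hm : m ∈ V) : m < max R k := lt_max_of_lt_left (mem_range.1 (hVR hm))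
  have hcol (e : {e : Finset (Fin (max R k)) // #e = k}) (he : e.1 ⊆ V.attachFin hVlt) :
      col e = c := by
    rw [← htoNat.extend_apply col]
    exact hc.preimage Fin.valEmbedding e (fun a ha => (mem_attachFin hVlt).1 (he ha)) e.2
  exact ⟨V.attachFin hVlt, (card_attachFin V hVlt).trans hV,
    fun e e' he he' => (hcol e he).trans (hcol e' he').symm⟩
end

section
/- Let τ be a finite relational signature and n a natural number. There exists a number f(n) such that for every τ-structure S and any two disjoint subsets A, B of its domain with |A|, |B| ≥ f(n), there exist subsets A' ⊆ A and B' ⊆ B with |A'| = |B'| = n and a linear order ≺ on B' such that for every l up to the maximal arity of τ, all tuples (a, b) with a ∈ A' and b a ≺-increasing l-tuple over B' have the same atomic type in S. -/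
lemma finRamsey (k : ℕ) : ∀ m n : ℕ, ∃ N : ℕ, ∀ (c : Finset ℕ → Fin k) (S : Finset ℕ),
    N ≤ S.card → ∃ T, T ⊆ S ∧ T.card = n ∧ ∃ col : Fin k,
      ∀ u, u ⊆ T → u.card = m → c u = col := by
  intro m
  induction m with
  | zero =>
    intro n
    refine ⟨n, fun c S hS => ?_⟩
    obtain ⟨T, hTS, hTc⟩ := Finset.exists_subset_card_eq hS
    refine ⟨T, hTS, hTc, c ∅, fun u hu hu0 => ?_⟩
    rw [Finset.card_eq_zero.mp hu0]
  | succ m IH =>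
    -- prehomogeneous sets
    have pre : ∀ t : ℕ, ∃ N : ℕ, ∀ (c : Finset ℕ → Fin k) (S : Finset ℕ), N ≤ S.card →
        ∃ Y, Y ⊆ S ∧ Y.card = t ∧ ∃ f : ℕ → Fin k,
          ∀ u, u ⊆ Y → u.card = m + 1 → ∀ hu : u.Nonempty, c u = f (u.min' hu) := by
      intro t
      induction t with
      | zero =>
        refine ⟨0, fun c S _ => ⟨∅, Finset.empty_subset _, Finset.card_empty, fun _ => c ∅,
          fun u hu hcard _ => ?_⟩⟩
        rw [Finset.subset_empty.mp hu] at hcard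
        simp at hcard
      | succ t IHt =>
        obtain ⟨Nt, hNt⟩ := IHt
        obtain ⟨M, hM⟩ := IH Nt
        refine ⟨M + 1, fun c S hS => ?_⟩
        have hSne : S.Nonempty := Finset.card_pos.mp (by omega)
        set x := S.min' hSne with hx
        have hxS : x ∈ S := S.min'_mem hSne
        have hS' : M ≤ (S.erase x).card := by
          rw [Finset.card_erase_of_mem hxS]; omega
        obtain ⟨T', hT'S, hT'c, colx, hmono⟩ := hM (fun u => c (insert x u)) (S.erase x) hS'
        obtain ⟨Y', hY'T', hY'c, f, hf⟩ := hNt c T' (le_of_eq hT'c.symm)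
        have hxY' : x ∉ Y' := fun h => (Finset.mem_erase.mp (hT'S (hY'T' h))).1 rfl
        refine ⟨insert x Y', ?_, ?_, Function.update f x colx, ?_⟩
        · intro y hy
          rcases Finset.mem_insert.mp hy with rfl | hy
          · exact hxS
          · exact Finset.erase_subset _ _ (hT'S (hY'T' hy))
        · rw [Finset.card_insert_of_notMem hxY', hY'c]
        · intro u hu hcard hune
          by_cases hxu : x ∈ u
          · have hmin : u.min' hune = x := by
              apply le_antisymm (Finset.min'_le _ _ hxu)
              apply S.min'_le
              apply Finset.mem_of_subset _ (u.min'_mem hune)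
              intro y hy
              rcases Finset.mem_insert.mp (hu hy) with rfl | hy'
              · exact hxS
              · exact Finset.erase_subset _ _ (hT'S (hY'T' hy'))
            rw [hmin, Function.update_self]
            have herase : u.erase x ⊆ T' := by
              intro y hy
              have hyu := Finset.mem_erase.mp hy
              rcases Finset.mem_insert.mp (hu hyu.2) with h | h
              · exact absurd h hyu.1
              · exact hY'T' h
            have hcard' : (u.erase x).card = m := by
              rw [Finset.card_erase_of_mem hxu, hcard]; omega
            have := hmono (u.erase x) herase hcard'
            rwa [Finset.insert_erase hxu] at this
          · have huY' : u ⊆ Y' := fun y hy =>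
              (Finset.mem_insert.mp (hu hy)).resolve_left (fun h => hxu (h ▸ hy))
            rw [hf u huY' hcard hune, Function.update_of_ne]
            intro h
            exact hxu (h ▸ u.min'_mem hune)
    intro n
    obtain ⟨Np, hNp⟩ := pre (k * n + 1)
    refine ⟨Np, fun c S hS => ?_⟩
    obtain ⟨Y, hYS, hYc, f, hf⟩ := hNp c S hS
    have hpig : ∃ col : Fin k, n < (Y.filter fun y => f y = col).card := by
      have := Finset.exists_lt_card_fiber_of_mul_lt_card_of_maps_to
        (s := Y) (t := (Finset.univ : Finset (Fin k))) (f := f) (n := n)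
        (fun a _ => Finset.mem_univ _) (by simp only [Finset.card_univ, Fintype.card_fin, hYc]; omega)
      obtain ⟨y, _, hy⟩ := this
      exact ⟨y, hy⟩
    obtain ⟨col, hcol⟩ := hpig
    obtain ⟨T, hTfib, hTc⟩ := Finset.exists_subset_card_eq (le_of_lt hcol)
    refine ⟨T, fun y hy => hYS (Finset.mem_filter.mp (hTfib hy)).1, hTc, col, ?_⟩
    intro u hu hucard
    have hune : u.Nonempty := Finset.card_pos.mp (by omega)
    have huY : u ⊆ Y := fun y hy => (Finset.mem_filter.mp (hTfib (hu hy))).1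
    rw [hf u huY hucard hune]
    exact (Finset.mem_filter.mp (hTfib (hu (u.min'_mem hune)))).2


/-- Two `l`-tuples over a relational structure have the same atomic type: they satisfy
the same equalities and the same relational atoms. -/
def SameType {X R : Type} (ar : R → ℕ) (interp : ∀ r, (Fin (ar r) → X) → Prop)
    {l : ℕ} (v w : Fin l → X) : Prop :=
  (∀ i j, v i = v j ↔ w i = w j) ∧
  ∀ (r : R) (ι : Fin (ar r) → Fin l), (interp r (v ∘ ι) ↔ interp r (w ∘ ι))

/-- **Homogeneous pair extraction.** For a finite relational signature of maximal
arity `m` and every `n` there is `N = f(n)` such that for every structure and any two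
disjoint subsets `A`, `B` of its domain of size at least `N` there are `A' ⊆ A` and
`B' ⊆ B` of size `n` and a linear order on `B'` (given by an injective enumeration
`e : Fin n → X` of `B'`) such that for every `l ≤ m`, all tuples `(a, b)` with
`a ∈ A'` and `b` a `≺`-increasing `l`-tuple over `B'` (i.e. `b = e ∘ ι` for a strictly
monotone `ι`) have the same atomic type. -/
theorem homogeneous_pair_extraction (R : Type) [Fintype R] (ar : R → ℕ) (m : ℕ)
    (har : ∀ r, ar r ≤ m) (n : ℕ) :
    ∃ N : ℕ, ∀ (X : Type) (interp : ∀ r, (Fin (ar r) → X) → Prop) (A B : Set X),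
      Disjoint A B →
      (∃ SA : Finset X, ↑SA ⊆ A ∧ N ≤ SA.card) →
      (∃ SB : Finset X, ↑SB ⊆ B ∧ N ≤ SB.card) →
      ∃ (A' B' : Finset X) (e : Fin n → X),
        ↑A' ⊆ A ∧ ↑B' ⊆ B ∧ A'.card = n ∧ B'.card = n ∧
        Function.Injective e ∧ (∀ i, e i ∈ B') ∧
        ∀ l, l ≤ m → ∀ (a a' : X) (ι ι' : Fin l → Fin n),
          a ∈ A' → a' ∈ A' → StrictMono ι → StrictMono ι' →
          SameType ar interp
            (Fin.cons a (e ∘ ι) : Fin (l + 1) → X)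
            (Fin.cons a' (e ∘ ι') : Fin (l + 1) → X) := by
  classical
  obtain rfl | hn := Nat.eq_zero_or_pos n
  · refine ⟨0, fun X interp A B hAB hA hB => ⟨∅, ∅, Fin.elim0, by simp, by simp, rfl, rfl,
      fun i => i.elim0, fun i => i.elim0, fun l hl a a' ι ι' ha ha' _ _ => ?_⟩⟩
    simp at ha
  -- color space for relational atoms on (m+1)-tuples
  obtain ⟨M, hM⟩ := finRamsey (Fintype.card (∀ r : R, (Fin (ar r) → Fin (m+1)) → Bool)) m (n + m)
  refine ⟨max (max M n)
      (Fintype.card ((Fin m → Fin M) → ∀ r : R, (Fin (ar r) → Fin (m+1)) → Bool) * n + 1),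
      fun X interp A B hAB hA hB => ?_⟩
  obtain ⟨SA, hSAA, hSAc⟩ := hA
  obtain ⟨SB, hSBB, hSBc⟩ := hB
  let colorOf : (Fin (m+1) → X) → ∀ r : R, (Fin (ar r) → Fin (m+1)) → Bool :=
    fun v r ι₀ => decide (interp r (v ∘ ι₀))
  -- pick B₀ ⊆ SB of card M with enumeration e₀
  have hMSB : M ≤ SB.card := le_trans (le_trans (le_max_left M n) (le_max_left _ _)) hSBc
  obtain ⟨B₀, hB₀SB, hB₀c⟩ := Finset.exists_subset_card_eq hMSB
  let e₀ : Fin M → X := fun i => ↑(B₀.equivFin.symm (Fin.cast hB₀c.symm i))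
  have he₀ : Function.Injective e₀ := by
    intro i j h
    have h2 := B₀.equivFin.symm.injective (Subtype.coe_injective h)
    have h3 := congrArg Fin.val h2
    exact Fin.ext h3
  have he₀mem : ∀ i, e₀ i ∈ B₀ := fun i => (B₀.equivFin.symm _).2
  -- pigeonhole on A by the pattern function p
  let p : X → ((Fin m → Fin M) → ∀ r : R, (Fin (ar r) → Fin (m+1)) → Bool) :=
    fun a κ => colorOf (Fin.cons a (e₀ ∘ κ))
  have hKA : Fintype.card ((Fin m → Fin M) → ∀ r : R, (Fin (ar r) → Fin (m+1)) → Bool) * n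
      < SA.card := by
    have := le_trans (le_max_right _ _) hSAc; omega
  obtain ⟨q, -, hq⟩ := Finset.exists_lt_card_fiber_of_mul_lt_card_of_maps_to
    (t := (Finset.univ : Finset ((Fin m → Fin M) → ∀ r : R, (Fin (ar r) → Fin (m+1)) → Bool)))
    (f := p) (fun a _ => Finset.mem_univ (p a)) (by rwa [Finset.card_univ])
  obtain ⟨A', hA'f, hA'c⟩ := Finset.exists_subset_card_eq (le_of_lt hq)
  have hA'SA : A' ⊆ SA := fun y hy => (Finset.mem_filter.mp (hA'f hy)).1
  have hA'p : ∀ a ∈ A', p a = q := fun a ha => (Finset.mem_filter.mp (hA'f ha)).2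
  obtain ⟨a₀, ha₀⟩ := Finset.card_pos.mp (show 0 < A'.card by omega)
  -- Ramsey on B₀ indices
  let eqv := Fintype.equivFin (∀ r : R, (Fin (ar r) → Fin (m+1)) → Bool)
  obtain ⟨T, hTsub, hTcard, col, hcol⟩ := hM
    (fun u => if h : u.card = m ∧ ∀ x ∈ u, x < M then
        eqv (colorOf (Fin.cons a₀ (fun j =>
          e₀ ⟨u.orderEmbOfFin h.1 j, h.2 _ (Finset.orderEmbOfFin_mem u h.1 j)⟩)))
      else eqv fun _ _ => false)
    (Finset.range M) (by simp)
  have hTlt : ∀ i : Fin (n + m), T.orderEmbOfFin hTcard i < M :=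
    fun i => Finset.mem_range.mp (hTsub (Finset.orderEmbOfFin_mem T hTcard i))
  let tT : Fin (n + m) → Fin M := fun i => ⟨T.orderEmbOfFin hTcard i, hTlt i⟩
  have htT : StrictMono tT := by
    intro i j hij
    exact (T.orderEmbOfFin hTcard).strictMono hij
  -- key monochromaticity
  have key : ∀ κ : Fin m → Fin (n + m), StrictMono κ →
      colorOf (Fin.cons a₀ (e₀ ∘ tT ∘ κ)) = eqv.symm col := by
    intro κ hκ
    have hmono : StrictMono (fun j : Fin m => ((tT (κ j) : ℕ))) := by
      intro i j hij
      exact htT (hκ hij)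
    set u : Finset ℕ := Finset.image (fun j : Fin m => ((tT (κ j) : ℕ))) Finset.univ with hu
    have huT : u ⊆ T := by
      intro x hx
      obtain ⟨j, -, rfl⟩ := Finset.mem_image.mp hx
      exact Finset.orderEmbOfFin_mem T hTcard (κ j)
    have hucard : u.card = m := by
      rw [hu, Finset.card_image_of_injective _ hmono.injective, Finset.card_univ,
        Fintype.card_fin]
    have hult : ∀ x ∈ u, x < M := by
      intro x hx
      obtain ⟨j, -, rfl⟩ := Finset.mem_image.mp hx
      exact hTlt (κ j)
    have hc := hcol u huT hucard
    rw [dif_pos (⟨hucard, hult⟩ : u.card = m ∧ ∀ x ∈ u, x < M)] at hc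
    have hemb : (fun j : Fin m => ((tT (κ j) : ℕ))) = ⇑(u.orderEmbOfFin hucard) :=
      Finset.orderEmbOfFin_unique hucard
        (fun j => Finset.mem_image.mpr ⟨j, Finset.mem_univ _, rfl⟩) hmono
    have harg : (fun j => e₀ ⟨u.orderEmbOfFin hucard j,
        hult _ (Finset.orderEmbOfFin_mem u hucard j)⟩) = e₀ ∘ tT ∘ κ := by
      funext j
      congr 1
      exact Fin.ext (congrFun hemb j).symm
    rw [harg] at hc
    exact (Equiv.eq_symm_apply eqv).mpr hc
  -- define e and B'
  have hnn : n ≤ n + m := Nat.le_add_right n m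
  let e : Fin n → X := fun i => e₀ (tT (Fin.castLE hnn i))
  have he : Function.Injective e := by
    intro i j h
    have := htT.injective (he₀ h)
    exact Fin.castLE_injective hnn this
  have heB : ∀ i, e i ∈ B := fun i => hSBB (hB₀SB (he₀mem _))
  refine ⟨A', Finset.image e Finset.univ, e, fun y hy => hSAA (hA'SA hy), ?_, hA'c, ?_,
    he, fun i => Finset.mem_image.mpr ⟨i, Finset.mem_univ _, rfl⟩, ?_⟩
  · intro y hy
    simp only [Finset.coe_image, Set.mem_image] at hy
    obtain ⟨i, -, rfl⟩ := hy
    exact heB i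
  · rw [Finset.card_image_of_injective _ he, Finset.card_univ, Fintype.card_fin]
  intro l hl a a' ι ι' ha ha' hι hι'
  have haA : a ∈ A := hSAA (hA'SA ha)
  have ha'A : a' ∈ A := hSAA (hA'SA ha')
  have hneB : ∀ z ∈ A, ∀ w : Fin n, z ≠ e w := by
    intro z hz w h
    exact Set.disjoint_left.mp hAB hz (h ▸ heB w)
  constructor
  · -- equality component
    intro i j
    rcases Fin.eq_zero_or_eq_succ i with rfl | ⟨i', rfl⟩ <;>
      rcases Fin.eq_zero_or_eq_succ j with rfl | ⟨j', rfl⟩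
    · simp
    · simp only [Fin.cons_zero, Fin.cons_succ, Function.comp_apply]
      constructor
      · intro h; exact absurd h (hneB a haA _)
      · intro h; exact absurd h (hneB a' ha'A _)
    · simp only [Fin.cons_zero, Fin.cons_succ, Function.comp_apply]
      constructor
      · intro h; exact absurd h.symm (hneB a haA _)
      · intro h; exact absurd h.symm (hneB a' ha'A _)
    · simp only [Fin.cons_succ, Function.comp_apply]
      rw [he.eq_iff, hι.injective.eq_iff, he.eq_iff, hι'.injective.eq_iff]
  -- relational component
  intro r ι₀
  -- extend ι, ι' to strict mono maps Fin m → Fin (n+m)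
  have hext : ∀ ι₁ : Fin l → Fin n, StrictMono ι₁ → ∃ κ : Fin m → Fin (n + m),
      StrictMono κ ∧ ∀ j : Fin l, κ (Fin.castLE hl j) = Fin.castLE hnn (ι₁ j) := by
    intro ι₁ hι₁
    refine ⟨fun j => if h : (j : ℕ) < l then ⟨(ι₁ ⟨j, h⟩ : ℕ), by
        have := (ι₁ ⟨j, h⟩).isLt; omega⟩ else ⟨n + j, by have := j.isLt; omega⟩, ?_, ?_⟩
    · intro j1 j2 hlt
      have hval : (j1 : ℕ) < (j2 : ℕ) := hlt
      by_cases h1 : (j1 : ℕ) < l <;> by_cases h2 : (j2 : ℕ) < l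
      · simp only [dif_pos h1, dif_pos h2, Fin.mk_lt_mk]
        exact hι₁ (show (⟨j1, h1⟩ : Fin l) < ⟨j2, h2⟩ from hval)
      · simp only [dif_pos h1, dif_neg h2, Fin.mk_lt_mk]
        have := (ι₁ ⟨j1, h1⟩).isLt; omega
      · omega
      · simp only [dif_neg h1, dif_neg h2, Fin.mk_lt_mk]; omega
    · intro j
      have hj : ((Fin.castLE hl j : Fin m) : ℕ) < l := by simp [j.isLt]
      simp only [dif_pos hj]
      apply Fin.ext
      simp
  obtain ⟨κ, hκ, hκι⟩ := hext ι hι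
  obtain ⟨κ', hκ', hκι'⟩ := hext ι' hι'
  -- the colors agree
  have h1 : colorOf (Fin.cons a (e₀ ∘ tT ∘ κ)) = colorOf (Fin.cons a' (e₀ ∘ tT ∘ κ')) := by
    have ha1 : p a = q := hA'p a ha
    have ha2 : p a' = q := hA'p a' ha'
    have ha0 : p a₀ = q := hA'p a₀ ha₀
    calc colorOf (Fin.cons a (e₀ ∘ tT ∘ κ)) = p a (tT ∘ κ) := rfl
      _ = p a₀ (tT ∘ κ) := by rw [ha1, ha0]
      _ = eqv.symm col := key κ hκ
      _ = p a₀ (tT ∘ κ') := (key κ' hκ').symm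
      _ = p a' (tT ∘ κ') := by rw [ha2, ha0]
      _ = colorOf (Fin.cons a' (e₀ ∘ tT ∘ κ')) := rfl
  -- transfer along σ
  let σ : Fin (l + 1) → Fin (m + 1) :=
    fun i => Fin.cases 0 (fun j => Fin.succ (Fin.castLE hl j)) i
  have hrw : ∀ (z : X) (ι₁ : Fin l → Fin n) (κ₁ : Fin m → Fin (n + m)),
      (∀ j : Fin l, κ₁ (Fin.castLE hl j) = Fin.castLE hnn (ι₁ j)) →
      (Fin.cons z (e₀ ∘ tT ∘ κ₁) : Fin (m+1) → X) ∘ σ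
        = (Fin.cons z (e ∘ ι₁) : Fin (l+1) → X) := by
    intro z ι₁ κ₁ hκ₁
    funext i
    refine Fin.cases ?_ (fun j => ?_) i
    · simp [σ]
    · simp only [Function.comp_apply, σ, Fin.cases_succ, Fin.cons_succ]
      rw [hκ₁ j]
  have h2 := congrFun (congrFun h1 r) (σ ∘ ι₀)
  simp only [colorOf, decide_eq_decide] at h2
  have e1 : (Fin.cons a (e₀ ∘ tT ∘ κ) : Fin (m+1) → X) ∘ (σ ∘ ι₀)
      = (Fin.cons a (e ∘ ι) : Fin (l+1) → X) ∘ ι₀ := by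
    rw [← Function.comp_assoc, hrw a ι κ hκι]
  have e2 : (Fin.cons a' (e₀ ∘ tT ∘ κ') : Fin (m+1) → X) ∘ (σ ∘ ι₀)
      = (Fin.cons a' (e ∘ ι') : Fin (l+1) → X) ∘ ι₀ := by
    rw [← Function.comp_assoc, hrw a' ι' κ' hκι']
  rw [e1, e2] at h2
  exact h2
end

section
/- Let P be a dynamic program all of whose update formulas are quantifier-free first-order formulas over a relational signature. Let S and T be states (structures) over the same signature with domains D_S, D_T, let A ⊆ D_S and B ⊆ D_T contain all constants, and suppose the induced substructures S|A and T|B are isomorphic via a bijection π. Then after applying any two π-respecting sequences of modifications (tuple insertions/deletions restricted to A and B), the resulting induced substructures on A and B are again isomorphic via π. -/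
/-- Quantifier-free formulas over a relational signature (`R` with arities `ar`),
with `k` free variables and `p` constant symbols. -/
inductive QF (R : Type) (ar : R → ℕ) (k p : ℕ) : Type where
  | rel (r : R) (ι : Fin (ar r) → Fin k ⊕ Fin p)
  | eq (i j : Fin k ⊕ Fin p)
  | not (φ : QF R ar k p)
  | and (φ ψ : QF R ar k p)
  | or (φ ψ : QF R ar k p)

/-- Evaluation of a quantifier-free formula. -/
def QF.eval {R : Type} {ar : R → ℕ} {k p : ℕ} {X : Type}
    (interp : ∀ r, (Fin (ar r) → X) → Prop) (c : Fin p → X)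
    (a : Fin k → X) : QF R ar k p → Prop
  | .rel r ι => interp r (fun i => Sum.elim a c (ι i))
  | .eq i j => Sum.elim a c i = Sum.elim a c j
  | .not φ => ¬ φ.eval interp c a
  | .and φ ψ => φ.eval interp c a ∧ ψ.eval interp c a
  | .or φ ψ => φ.eval interp c a ∨ ψ.eval interp c a

/-- A quantifier-free dynamic (update) program: for every kind of modification
(insertion `true` / deletion `false`) of an input relation `s` and every auxiliary
relation `r`, a quantifier-free update formula whose free variables are the modified
tuple followed by the updated tuple. -/
structure DynProg (Rin Raux : Type) (arin : Rin → ℕ) (araux : Raux → ℕ) (p : ℕ) where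
  upd : Bool → (s : Rin) → (r : Raux) →
    QF (Rin ⊕ Raux) (Sum.elim arin araux) (arin s + araux r) p

/-- A state of a dynamic program: an input database and an auxiliary database
over a common domain `X`. -/
structure DState (X : Type) (Rin Raux : Type) (arin : Rin → ℕ) (araux : Raux → ℕ) where
  inp : ∀ s, (Fin (arin s) → X) → Prop
  aux : ∀ r, (Fin (araux r) → X) → Prop

/-- The combined interpretation of input and auxiliary relation symbols. -/
def DState.interp {X Rin Raux : Type} {arin : Rin → ℕ} {araux : Raux → ℕ}
    (st : DState X Rin Raux arin araux) :
    ∀ rr : Rin ⊕ Raux, (Fin (Sum.elim arin araux rr) → X) → Prop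
  | .inl s => st.inp s
  | .inr r => st.aux r

/-- A concrete modification: insertion (`ins = true`) or deletion of a tuple `tup`
in the input relation `sym`. -/
structure DynMod (X : Type) (Rin : Type) (arin : Rin → ℕ) where
  ins : Bool
  sym : Rin
  tup : Fin (arin sym) → X

/-- The image of a modification under a map `π`. Two modification sequences
respect `π` precisely if one is the image of the other under this map. -/
def DynMod.map {X Y Rin : Type} {arin : Rin → ℕ} (π : X → Y) (μ : DynMod X Rin arin) :
    DynMod Y Rin arin :=
  ⟨μ.ins, μ.sym, π ∘ μ.tup⟩

/-- Applying one modification to a state: the input relation is changed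
accordingly, and every auxiliary relation is recomputed by its quantifier-free
update formula, evaluated in the old state with the modified tuple as parameters. -/
def applyMod {X Rin Raux : Type} {arin : Rin → ℕ} {araux : Raux → ℕ} {p : ℕ}
    (P : DynProg Rin Raux arin araux p) (c : Fin p → X)
    (st : DState X Rin Raux arin araux) (μ : DynMod X Rin arin) :
    DState X Rin Raux arin araux where
  inp s v := if μ.ins then st.inp s v ∨ (s = μ.sym ∧ HEq v μ.tup)
             else st.inp s v ∧ ¬(s = μ.sym ∧ HEq v μ.tup)
  aux r w := (P.upd μ.ins μ.sym r).eval st.interp c (Fin.append μ.tup w)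

/-- `π` is an isomorphism between the substructures induced by `A` and `B` in the
states `S` and `T` (both input and auxiliary relations are preserved, and the
constants lie in `A` and correspond under `π`). -/
def IsoOn {X Y Rin Raux : Type} {arin : Rin → ℕ} {araux : Raux → ℕ} {p : ℕ}
    (π : X → Y) (A : Set X) (B : Set Y) (cS : Fin p → X) (cT : Fin p → Y)
    (S : DState X Rin Raux arin araux) (T : DState Y Rin Raux arin araux) : Prop :=
  Set.BijOn π A B ∧ (∀ i, cS i ∈ A) ∧ (∀ i, cT i = π (cS i)) ∧
  (∀ s (v : Fin (arin s) → X), (∀ i, v i ∈ A) → (S.inp s v ↔ T.inp s (π ∘ v))) ∧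
  (∀ r (w : Fin (araux r) → X), (∀ i, w i ∈ A) → (S.aux r w ↔ T.aux r (π ∘ w)))


/-! A quantifier-free formula only inspects the relations on the tuples built from its
parameters and the constants, and equalities between them. Hence a map that is injective
on `A` and preserves all relations on `A` preserves the truth of quantifier-free formulas
with parameters in `A`. Since each update formula is evaluated at parameters taken from
the modified tuple (in `A`) and the updated tuple, the isomorphism between the induced
substructures survives a single modification, and by induction any sequence of them. -/

open Set

theorem Fin.comp_append {X Y : Type*} {m n : ℕ} (π : X → Y) (u : Fin m → X)
    (v : Fin n → X) : π ∘ Fin.append u v = Fin.append (π ∘ u) (π ∘ v) := by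
  funext i
  refine Fin.addCases (fun l => ?_) (fun r => ?_) i <;> simp

theorem Fin.append_mem {X : Type*} {m n : ℕ} {A : Set X} {u : Fin m → X} {v : Fin n → X}
    (hu : ∀ i, u i ∈ A) (hv : ∀ i, v i ∈ A) (i : Fin (m + n)) : Fin.append u v i ∈ A := by
  refine Fin.addCases (fun l => ?_) (fun r => ?_) i <;> simp [hu, hv]

theorem QF.eval_comp_iff {R : Type} {ar : R → ℕ} {k p : ℕ} {X Y : Type}
    {I : ∀ r, (Fin (ar r) → X) → Prop} {J : ∀ r, (Fin (ar r) → Y) → Prop}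
    {π : X → Y} {A : Set X} (hπ : InjOn π A)
    (hIJ : ∀ r (v : Fin (ar r) → X), (∀ i, v i ∈ A) → (I r v ↔ J r (π ∘ v)))
    {c : Fin p → X} (hc : ∀ i, c i ∈ A) {a : Fin k → X} (ha : ∀ i, a i ∈ A)
    (φ : QF R ar k p) : φ.eval I c a ↔ φ.eval J (π ∘ c) (π ∘ a) := by
  have hmem : ∀ i, Sum.elim a c i ∈ A := by rintro (i | i) <;> simp [ha, hc]
  have hcomp : Sum.elim (π ∘ a) (π ∘ c) = π ∘ Sum.elim a c := Sum.comp_elim π a c |>.symm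
  induction φ with
  | rel r ι =>
    simp only [QF.eval, hcomp]
    exact hIJ r _ fun i => hmem (ι i)
  | eq i j =>
    simp only [QF.eval, hcomp, Function.comp_apply]
    exact (hπ.eq_iff (hmem i) (hmem j)).symm
  | not φ ih => simp only [QF.eval, ih]
  | and φ ψ ih₁ ih₂ => simp only [QF.eval, ih₁, ih₂]
  | or φ ψ ih₁ ih₂ => simp only [QF.eval, ih₁, ih₂]

section IsoOn

variable {X Y Rin Raux : Type} {arin : Rin → ℕ} {araux : Raux → ℕ} {p : ℕ}
  {π : X → Y} {A : Set X} {B : Set Y} {cS : Fin p → X} {cT : Fin p → Y}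
  {S : DState X Rin Raux arin araux} {T : DState Y Rin Raux arin araux}

theorem IsoOn.interp_iff (h : IsoOn π A B cS cT S T) (rr : Rin ⊕ Raux)
    (v : Fin (Sum.elim arin araux rr) → X) (hv : ∀ i, v i ∈ A) :
    S.interp rr v ↔ T.interp rr (π ∘ v) := by
  obtain ⟨-, -, -, hinp, haux⟩ := h
  cases rr with
  | inl s => exact hinp s v hv
  | inr r => exact haux r v hv

theorem IsoOn.eval_iff (h : IsoOn π A B cS cT S T) {k : ℕ} {a : Fin k → X}
    (ha : ∀ i, a i ∈ A) (φ : QF (Rin ⊕ Raux) (Sum.elim arin araux) k p) :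
    φ.eval S.interp cS a ↔ φ.eval T.interp cT (π ∘ a) := by
  obtain ⟨hbij, hcA, hcπ, -, -⟩ := id h
  rw [show cT = π ∘ cS from funext hcπ]
  exact QF.eval_comp_iff hbij.injOn h.interp_iff hcA ha φ

theorem DynMod.hits_comp_iff (hπ : InjOn π A) (μ : DynMod X Rin arin) (hμ : ∀ i, μ.tup i ∈ A)
    (s : Rin) (v : Fin (arin s) → X) (hv : ∀ i, v i ∈ A) :
    (s = μ.sym ∧ HEq (π ∘ v) (π ∘ μ.tup)) ↔ (s = μ.sym ∧ HEq v μ.tup) := by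
  obtain ⟨_, _, _⟩ := μ
  constructor
  · rintro ⟨rfl, hvt⟩
    exact ⟨rfl, heq_of_eq <| funext fun i => hπ (hv i) (hμ i) (congrFun (eq_of_heq hvt) i)⟩
  · rintro ⟨rfl, hvt⟩
    exact ⟨rfl, heq_of_eq (congrArg (π ∘ ·) (eq_of_heq hvt))⟩

theorem IsoOn.applyMod (P : DynProg Rin Raux arin araux p) (h : IsoOn π A B cS cT S T)
    (μ : DynMod X Rin arin) (hμ : ∀ i, μ.tup i ∈ A) :
    IsoOn π A B cS cT (applyMod P cS S μ) (applyMod P cT T (μ.map π)) := by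
  obtain ⟨hbij, hcA, hcπ, hinp, -⟩ := id h
  refine ⟨hbij, hcA, hcπ, fun s v hv => ?_, fun r w hw => ?_⟩
  · simp only [_root_.applyMod, DynMod.map, hinp s v hv, μ.hits_comp_iff hbij.injOn hμ s v hv]
  · simp only [_root_.applyMod, DynMod.map]
    rw [h.eval_iff (Fin.append_mem hμ hw), Fin.comp_append]

end IsoOn

/-- **Substructure lemma for quantifier-free dynamic programs.** If the substructures
of two states induced by `A` and `B` are isomorphic via `π`, then after applying any
two `π`-respecting modification sequences on `A` and `B`, the resulting induced
substructures are again isomorphic via `π`. -/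
theorem substructure_lemma
    (X Y Rin Raux : Type) (arin : Rin → ℕ) (araux : Raux → ℕ) (p : ℕ)
    (P : DynProg Rin Raux arin araux p)
    (cS : Fin p → X) (cT : Fin p → Y)
    (S : DState X Rin Raux arin araux) (T : DState Y Rin Raux arin araux)
    (A : Set X) (B : Set Y) (π : X → Y)
    (hiso : IsoOn π A B cS cT S T)
    (α : List (DynMod X Rin arin)) (hα : ∀ μ ∈ α, ∀ i, μ.tup i ∈ A) :
    IsoOn π A B cS cT
      (α.foldl (applyMod P cS) S)
      ((α.map (DynMod.map π)).foldl (applyMod P cT) T) := by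
  induction α generalizing S T with
  | nil => exact hiso
  | cons μ α ih =>
    exact ih _ _ (hiso.applyMod P μ (hα μ List.mem_cons_self))
      fun ν hν => hα ν (List.mem_cons_of_mem μ hν)
end

section
/- For every alphabet of size c and every function g : ℕ → ℕ, there is a natural number H(c, g) such that every finite sequence w_1, ..., w_{H(c,g)} of words over the alphabet with |w_i| ≤ g(i) for all i contains indices l < k with w_l a subsequence of w_k. -/
/-!
By compactness. If no `H` worked, there would be bad sequences (no `l < k` with `w l` a
sublist of `w k`) of every length; by the length bounds there are only finitely many of each
length, and restrictions of bad sequences are bad, so Kőnig's lemma yields an infinite bad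
sequence, contradicting Higman's lemma.
-/

theorem exists_lt_sublist_of_finite {A : Type*} [Finite A] (f : ℕ → List A) :
    ∃ l k, l < k ∧ (f l).Sublist (f k) := by
  obtain ⟨l, k, hlk, hsub⟩ :=
    (Set.finite_univ.partiallyWellOrderedOn (r := (· = ·))).partiallyWellOrderedOn_sublistForall₂
      |>.exists_lt (f := f) fun _ ↦ by simp
  obtain ⟨l', hl', hsub'⟩ := List.sublistForall₂_iff.1 hsub
  rw [List.forall₂_eq_eq_eq] at hl'
  exact ⟨l, k, hlk, hl' ▸ hsub'⟩

theorem finite_setOf_forall_length_le {A : Type*} [Finite A] {n : ℕ} (b : Fin n → ℕ) :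
    {w : Fin n → List A | ∀ i, (w i).length ≤ b i}.Finite := by
  simpa [Set.pi] using Set.Finite.pi (t := fun i ↦ {l : List A | l.length ≤ b i})
    fun i ↦ List.finite_length_le A (b i)

/-- Kőnig's lemma for trees of finite sequences. -/
theorem exists_seq_forall_of_forall_exists_fin {β : Type*} (P : ∀ n, (Fin n → β) → Prop)
    (hfin : ∀ n, {w | P n w}.Finite) (hne : ∀ n, ∃ w, P n w)
    (hrestrict : ∀ {m n} (h : m ≤ n) (w : Fin n → β), P n w → P m (w ∘ Fin.castLE h)) :
    ∃ f : ℕ → β, ∀ n, P n (fun i ↦ f i) := by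
  have (n : ℕ) : Finite {w // P n w} := (hfin n).to_subtype
  have (n : ℕ) : Nonempty {w // P n w} := nonempty_subtype.2 (hne n)
  obtain ⟨F, hF⟩ := exists_seq_forall_proj_of_forall_finite (α := fun n ↦ {w // P n w})
    (fun h w ↦ ⟨w.1 ∘ Fin.castLE h, hrestrict h w.1 w.2⟩) (fun _ _ ↦ rfl) (fun _ _ _ _ _ _ ↦ rfl)
    (fun _ _ ↦ Set.toFinite _)
  refine ⟨fun i ↦ (F (i + 1)).1 (Fin.last i), fun n ↦ ?_⟩
  convert (F n).2 using 1
  funext i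
  exact (congr_arg (·.1 (Fin.last i)) (hF i.isLt)).symm

/-- **Effective (length-bounded) Higman's Lemma.** For every finite alphabet and every
function `g : ℕ → ℕ` there is `H` such that every sequence `w_1, ..., w_H` of words
with `|w_i| ≤ g(i)` contains indices `l < k` with `w_l` a (scattered) subsequence
of `w_k`. -/
theorem higman_effective (A : Type) [Fintype A] (g : ℕ → ℕ) :
    ∃ H : ℕ, ∀ w : Fin H → List A,
      (∀ i : Fin H, (w i).length ≤ g (i.1 + 1)) →
      ∃ l k : Fin H, l < k ∧ (w l).Sublist (w k) := by
  by_contra! hbad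
  obtain ⟨f, hf⟩ := exists_seq_forall_of_forall_exists_fin
    (fun n (w : Fin n → List A) ↦ (∀ i : Fin n, (w i).length ≤ g (i.1 + 1)) ∧
      ∀ l k : Fin n, l < k → ¬(w l).Sublist (w k))
    (fun n ↦ (finite_setOf_forall_length_le fun i : Fin n ↦ g (i.1 + 1)).subset fun _ hw ↦ hw.1)
    hbad
    (fun _ _ hw ↦ ⟨fun _ ↦ hw.1 _, fun _ _ hlk ↦ hw.2 _ _ hlk⟩)
  obtain ⟨l, k, hlk, hsub⟩ := exists_lt_sublist_of_finite f
  exact (hf (k + 1)).2 ⟨l, by omega⟩ ⟨k, by omega⟩ hlk hsub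
end

section
/- Fix a finite signature τ with only unary function symbols, a nesting-depth bound m, and 4-tuples as parameters. For every sufficiently large n and every τ-structure S whose domain contains distinct elements a_1, ..., a_n, s, t, there exist indices i < j such that the equality type of the (m+1)-neighborhood vector of (a_i, a_j, s, t) and that of (a_j, a_i, s, t) coincide. -/
/-!
Colour a pair `i < j` by the equality type of the neighbourhood vector of `(a_i, a_j, s, t)`
(the equality type of a vector `v` is `Setoid.ker v`). There are finitely many colours, so for
large `n` iterated pigeonhole yields a monochromatic triangle `i < j < l`. Moving from
`(a_i, a_j)` to `(a_j, a_l)` and to `(a_i, a_l)` preserves all equalities; chaining them shows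
that an equality `w(a_i) = v(a_j)` forces `w(a_j) = v(a_i)`, while equalities involving only one
of `a_i, a_j` (and `s, t`) transfer directly. Hence swapping `a_i` and `a_j` preserves the
equality type.
-/

/-- Evaluation of a word of unary function symbols (a term of the corresponding
nesting depth) at an element. -/
def evalW {F X : Type} (interp : F → X → X) : List F → X → X
  | [], x => x
  | f :: w, x => interp f (evalW interp w x)

/-- Words of unary function symbols of length (= term nesting depth) at most `k`. -/
def Wd (F : Type) (k : ℕ) : Type := {w : List F // w.length ≤ k}

/-- The depth-`k` neighborhood vector of the tuple `(x, y, s, t)`: for each component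
and each term of depth at most `k`, the resulting value. -/
def nvec4 {F X : Type} (interp : F → X → X) (k : ℕ) (x y s t : X) :
    Fin 4 × Wd F k → X :=
  fun p => evalW interp p.2.1 (![x, y, s, t] p.1)

open Finset

instance Wd.finite (F : Type) [Finite F] (k : ℕ) : Finite (Wd F k) :=
  (List.finite_length_le F k).to_subtype

instance Setoid.finite {α : Type*} [Finite α] : Finite (Setoid α) :=
  Finite.of_injective (@Setoid.r α) fun _ _ h => Setoid.ext fun a b => by rw [h]

section Ramsey

variable {ι C : Type*} [LinearOrder ι] [Finite C]

theorem exists_subset_card_eq_color_eq_of_lt (χ : ι → ι → C) (k : ℕ) (S : Finset ι)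
    (hS : (Nat.card C + 1) ^ k ≤ #S) : ∃ T ⊆ S, #T = k ∧
      ∀ x ∈ T, ∀ y ∈ T, ∀ z ∈ T, x < y → x < z → χ x y = χ x z := by
  classical
  induction k generalizing S with
  | zero => exact ⟨∅, by simp⟩
  | succ k ih =>
    have hpos : 0 < (Nat.card C + 1) ^ k := by positivity
    rw [pow_succ, mul_add_one, mul_comm] at hS
    have hne : S.Nonempty := by rw [← card_pos]; omega
    set x := S.min' hne
    have : Fintype C := Fintype.ofFinite C
    obtain ⟨c, -, hc⟩ := exists_le_card_fiber_of_mul_le_card_of_maps_to (s := S.erase x)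
      (f := χ x) (n := (Nat.card C + 1) ^ k) (fun _ _ => mem_univ _) ⟨χ x x, mem_univ _⟩
      (by rw [card_erase_of_mem (S.min'_mem hne), card_univ, ← Nat.card_eq_fintype_card]; omega)
    obtain ⟨T, hTS, hTcard, hT⟩ := ih _ hc
    have hTfib : ∀ y ∈ T, y ∈ S.erase x ∧ χ x y = c := fun y hy => mem_filter.1 (hTS hy)
    have hxT : ∀ y ∈ T, x < y := fun y hy =>
      have hy' := mem_erase.1 (hTfib y hy).1
      (S.min'_le y hy'.2).lt_of_ne' hy'.1
    have hinT : ∀ a ∈ insert x T, ∀ b ∈ insert x T, a < b → b ∈ T := by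
      rintro a ha b hb hab
      rcases mem_insert.1 hb with rfl | hb
      · rcases mem_insert.1 ha with rfl | ha
        · exact absurd hab (lt_irrefl _)
        · exact absurd (hxT a ha) hab.not_gt
      · exact hb
    refine ⟨insert x T,
      insert_subset (S.min'_mem hne) fun y hy => mem_of_mem_erase (hTfib y hy).1,
      by rw [card_insert_of_notMem fun h => lt_irrefl x (hxT x h), hTcard], ?_⟩
    intro a ha b hb d hd hab had
    have hbT := hinT a ha b hb hab
    have hdT := hinT a ha d hd had
    rcases mem_insert.1 ha with rfl | ha
    · rw [(hTfib b hbT).2, (hTfib d hdT).2]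
    · exact hT a ha b hbT d hdT hab had

theorem exists_lt_lt_color_eq_of_card_le [Fintype ι] (χ : ι → ι → C)
    (h : (Nat.card C + 1) ^ (Nat.card C + 2) ≤ Fintype.card ι) :
    ∃ x y z, x < y ∧ y < z ∧ χ x y = χ y z ∧ χ x y = χ x z := by
  classical
  have : Fintype C := Fintype.ofFinite C
  obtain ⟨T, -, hTcard, hT⟩ :=
    exists_subset_card_eq_color_eq_of_lt χ _ univ (by rwa [card_univ])
  have hTne : T.Nonempty := by rw [← card_pos]; omega
  set z := T.max' hTne
  have hz : z ∈ T := T.max'_mem hTne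
  have hlt : ∀ w ∈ T.erase z, w < z := fun w hw =>
    have hw' := mem_erase.1 hw
    (T.le_max' w hw'.2).lt_of_ne hw'.1
  obtain ⟨x, hx, y, hy, hxy, hc⟩ :=
    exists_ne_map_eq_of_card_lt_of_maps_to (t := univ) (f := fun w => χ w z)
      (by rw [card_erase_of_mem hz, card_univ, ← Nat.card_eq_fintype_card]; omega)
      (fun _ _ => mem_coe.2 (mem_univ _))
  wlog hxy' : x < y generalizing x y
  · exact this y hy x hx hxy.symm hc.symm (hxy.symm.lt_of_le (not_lt.1 hxy'))
  have hxz : χ x y = χ x z :=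
    hT x (mem_of_mem_erase hx) y (mem_of_mem_erase hy) z hz hxy' (hlt x hx)
  exact ⟨x, y, z, hxy', hlt y hy, hxz.trans hc, hxz⟩

end Ramsey

theorem ker_nvec4_eq_ker_nvec4_swap {F X : Type} {interp : F → X → X} {k : ℕ}
    {x₁ x₂ x₃ s t : X}
    (h₂₃ : Setoid.ker (nvec4 interp k x₁ x₂ s t) =
      Setoid.ker (nvec4 interp k x₂ x₃ s t))
    (h₁₃ : Setoid.ker (nvec4 interp k x₁ x₂ s t) =
      Setoid.ker (nvec4 interp k x₁ x₃ s t)) :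
    Setoid.ker (nvec4 interp k x₁ x₂ s t) = Setoid.ker (nvec4 interp k x₂ x₁ s t) := by
  have shift (c d : Fin 4) (w v : Wd F k) := Setoid.ext_iff.1 h₂₃ (c, w) (d, v)
  simp only [Setoid.ker_def, nvec4] at shift
  have cross (w v : Wd F k) (h : evalW interp w.1 x₁ = evalW interp v.1 x₂) :
      evalW interp w.1 x₂ = evalW interp v.1 x₁ := by
    have hw₂ : evalW interp w.1 x₂ = evalW interp v.1 x₃ := (shift 0 1 w v).1 h
    have hw₁ : evalW interp w.1 x₁ = evalW interp v.1 x₃ :=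
      (Setoid.ext_iff.1 h₁₃ (0, w) (1, v)).1 h
    have hv : evalW interp v.1 x₁ = evalW interp v.1 x₂ :=
      (shift 0 1 v v).2 (h.symm.trans hw₁)
    calc evalW interp w.1 x₂ = evalW interp w.1 x₁ := hw₂.trans hw₁.symm
      _ = evalW interp v.1 x₂ := h
      _ = evalW interp v.1 x₁ := hv.symm
  have same (w v : Wd F k) := shift 0 0 w v
  have same_s (w v : Wd F k) := shift 0 2 w v
  have same_t (w v : Wd F k) := shift 0 3 w v
  simp only [Matrix.cons_val] at same same_s same_t
  -- up to symmetry, each pair of positions is covered by `same`, `same_s`, `same_t` or `cross`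
  refine Setoid.ext fun ⟨c, w⟩ ⟨d, v⟩ => ?_
  fin_cases c <;> fin_cases d <;>
    simp only [Setoid.ker_def, nvec4, Fin.zero_eta, Fin.mk_one, Fin.reduceFinMk, Fin.isValue,
      Matrix.cons_val_zero, Matrix.cons_val_one, Matrix.cons_val] <;>
    grind

/-- For a finite signature of unary function symbols and a depth bound `m`, for every
sufficiently large `n`: in every structure containing pairwise distinct elements
`a_1, ..., a_n, s, t` there are indices `i < j` such that the equality types of the
depth-`(m+1)` neighborhood vectors of `(a_i, a_j, s, t)` and `(a_j, a_i, s, t)`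
coincide. -/
theorem ramsey_equality_types (F : Type) [Fintype F] (m : ℕ) :
    ∃ N : ℕ, ∀ n : ℕ, N ≤ n → ∀ (X : Type) (interp : F → X → X)
      (a : Fin n → X) (s t : X),
      Function.Injective a → (∀ i, a i ≠ s) → (∀ i, a i ≠ t) → s ≠ t →
      ∃ i j : Fin n, i < j ∧
        ∀ p q : Fin 4 × Wd F (m + 1),
          (nvec4 interp (m + 1) (a i) (a j) s t p
              = nvec4 interp (m + 1) (a i) (a j) s t q
            ↔ nvec4 interp (m + 1) (a j) (a i) s t p
              = nvec4 interp (m + 1) (a j) (a i) s t q) := by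
  let r := Nat.card (Setoid (Fin 4 × Wd F (m + 1)))
  refine ⟨(r + 1) ^ (r + 2), fun n hn X interp a s t _ _ _ _ => ?_⟩
  obtain ⟨i, j, l, hij, -, hjl, hil⟩ := exists_lt_lt_color_eq_of_card_le
    (fun i j : Fin n => Setoid.ker (nvec4 interp (m + 1) (a i) (a j) s t))
    (by rwa [Fintype.card_fin])
  exact ⟨i, j, hij, Setoid.ext_iff.1 (ker_nvec4_eq_ker_nvec4_swap hjl hil)⟩
end

section
/- Let τ be a signature with unary function symbols only and let S be a structure with elements a_{i_1}, a_{i_2}, a_{i_3} (pairwise distinct) and parameters s, t such that the equality types of the depth-(m+1) neighborhood vectors of (a_{i_1}, a_{i_2}, s, t), (a_{i_1}, a_{i_3}, s, t), and (a_{i_2}, a_{i_3}, s, t) all coincide. Then for all terms t_1, t_2 of depth at most m+1: if t_1(a_{i_1}) = t_2(a_{i_2}) then t_1(a_{i_2}) = t_2(a_{i_1}). -/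
/-- Unary terms of depth at most `k` in one variable, possibly based on one of the
constants `s`, `t` instead of the variable: a word of unary function symbols applied
to the variable (`base = 0`), to `s` (`base = 1`) or to `t` (`base = 2`). -/
def Tm1 (F : Type) (k : ℕ) : Type := {p : List F × Fin 3 // p.1.length ≤ k}

/-- Evaluation of a unary term at the element `x`, with constants `s`, `t`. -/
def Tm1.eval {F X : Type} {k : ℕ} (interp : F → X → X) (s t : X)
    (tm : Tm1 F k) (x : X) : X :=
  evalW interp tm.1.1 (![x, s, t] tm.1.2)

/-- If the equality types of the depth-`(m+1)` neighborhood vectors of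
`(a₁, a₂, s, t)`, `(a₁, a₃, s, t)` and `(a₂, a₃, s, t)` all coincide (the `aᵢ` being
pairwise distinct), then for all unary terms `t₁, t₂` of depth at most `m+1`:
`t₁(a₁) = t₂(a₂)` implies `t₁(a₂) = t₂(a₁)`. -/
theorem eq_type_term_swap (F : Type) (m : ℕ) (X : Type) (interp : F → X → X)
    (a1 a2 a3 s t : X) (h12 : a1 ≠ a2) (h13 : a1 ≠ a3) (h23 : a2 ≠ a3)
    (hA : ∀ p q : Fin 4 × Wd F (m + 1),
      (nvec4 interp (m + 1) a1 a2 s t p = nvec4 interp (m + 1) a1 a2 s t q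
        ↔ nvec4 interp (m + 1) a1 a3 s t p = nvec4 interp (m + 1) a1 a3 s t q))
    (hB : ∀ p q : Fin 4 × Wd F (m + 1),
      (nvec4 interp (m + 1) a1 a2 s t p = nvec4 interp (m + 1) a1 a2 s t q
        ↔ nvec4 interp (m + 1) a2 a3 s t p = nvec4 interp (m + 1) a2 a3 s t q)) :
    ∀ t1 t2 : Tm1 F (m + 1),
      Tm1.eval interp s t t1 a1 = Tm1.eval interp s t t2 a2 →
      Tm1.eval interp s t t1 a2 = Tm1.eval interp s t t2 a1 := by
  intro t1 t2 h
  obtain ⟨⟨w1, b1⟩, h1⟩ := t1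
  obtain ⟨⟨w2, b2⟩, h2⟩ := t2
  simp only [Tm1.eval] at h ⊢
  fin_cases b1 <;> fin_cases b2 <;>
    simp only [Matrix.cons_val_zero, Matrix.cons_val_one, Matrix.head_cons,
      Matrix.cons_val_two, Matrix.tail_cons, Fin.isValue] at h ⊢
  · -- both variable-based
    have e1 : evalW interp w1 a1 = evalW interp w2 a3 :=
      (hA ((0 : Fin 4), ⟨w1, h1⟩) ((1 : Fin 4), ⟨w2, h2⟩)).mp h
    have e2 : evalW interp w1 a2 = evalW interp w2 a3 :=
      (hB ((0 : Fin 4), ⟨w1, h1⟩) ((1 : Fin 4), ⟨w2, h2⟩)).mp h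
    have e3 : evalW interp w2 a2 = evalW interp w2 a3 := h ▸ e1
    have e4 : evalW interp w2 a1 = evalW interp w2 a2 :=
      (hB ((0 : Fin 4), ⟨w2, h2⟩) ((1 : Fin 4), ⟨w2, h2⟩)).mpr e3
    exact e2.trans (e3.symm.trans e4.symm)
  · -- t1 variable, t2 based on s
    exact (hB ((0 : Fin 4), ⟨w1, h1⟩) ((2 : Fin 4), ⟨w2, h2⟩)).mp h
  · -- t1 variable, t2 based on t
    exact (hB ((0 : Fin 4), ⟨w1, h1⟩) ((3 : Fin 4), ⟨w2, h2⟩)).mp h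
  · -- t1 based on s, t2 variable
    have e1 : evalW interp w1 s = evalW interp w2 a3 :=
      (hB ((2 : Fin 4), ⟨w1, h1⟩) ((1 : Fin 4), ⟨w2, h2⟩)).mp h
    have e3 : evalW interp w2 a2 = evalW interp w2 a3 := h ▸ e1
    have e4 : evalW interp w2 a1 = evalW interp w2 a2 :=
      (hB ((0 : Fin 4), ⟨w2, h2⟩) ((1 : Fin 4), ⟨w2, h2⟩)).mpr e3
    exact h.trans e4.symm
  · exact h
  · exact h
  · -- t1 based on t, t2 variable
    have e1 : evalW interp w1 t = evalW interp w2 a3 :=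
      (hB ((3 : Fin 4), ⟨w1, h1⟩) ((1 : Fin 4), ⟨w2, h2⟩)).mp h
    have e3 : evalW interp w2 a2 = evalW interp w2 a3 := h ▸ e1
    have e4 : evalW interp w2 a1 = evalW interp w2 a2 :=
      (hB ((0 : Fin 4), ⟨w2, h2⟩) ((1 : Fin 4), ⟨w2, h2⟩)).mpr e3
    exact h.trans e4.symm
  · exact h
  · exact h
end

section
/- Consider a dynamic program over a relational auxiliary schema whose update formulas are all conjunctions of relational atoms in which no variable occurs more than once in any atom, maintaining the query 'U is nonempty' under honest deletions of elements from a unary relation U. Define the deletion dependency graph on auxiliary relation symbols with an edge (R, R') whenever R' occurs in a deletion-update formula of R, and let the deletion depth of R be the length of the shortest path from the query symbol Q to R. Then every relation symbol of deletion depth k has arity at most k. -/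
/-- A relational atom over the auxiliary schema (`Raux` with arities `ar`), whose
variables come from `Fin n`. -/
structure CQAtom (Raux : Type) (ar : Raux → ℕ) (n : ℕ) where
  sym : Raux
  ι : Fin (ar sym) → Fin n

/-- A conjunctive quantifier-free deletion-update program: for every auxiliary
relation symbol `R` of arity `ar R`, its deletion-update formula is a conjunction
(list) of atoms over the variables `u, y_1, ..., y_{ar R}` (i.e. `Fin (ar R + 1)`,
where variable `0` stands for the deleted element `u`). -/
structure CQDelProg (Raux : Type) (ar : Raux → ℕ) where
  delFormula : ∀ R : Raux, List (CQAtom Raux ar (ar R + 1))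

/-- The deletion dependency graph: an edge `(R, R')` whenever `R'` occurs in the
deletion-update formula of `R`. -/
def DelEdge {Raux : Type} {ar : Raux → ℕ} (P : CQDelProg Raux ar)
    (R R' : Raux) : Prop :=
  ∃ a ∈ P.delFormula R, a.sym = R'

/-- `Reaches P Q k R`: there is a path of length `k` from `Q` to `R` in the deletion
dependency graph. -/
inductive Reaches {Raux : Type} {ar : Raux → ℕ} (P : CQDelProg Raux ar) (Q : Raux) :
    ℕ → Raux → Prop where
  | zero : Reaches P Q 0 Q
  | succ {k : ℕ} {R R' : Raux} : Reaches P Q k R → DelEdge P R R' →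
      Reaches P Q (k + 1) R'

/-- If no variable occurs more than once in any atom of the (conjunctive,
quantifier-free) deletion-update formulas, and the query symbol `Q` is `0`-ary, then
every auxiliary relation symbol of deletion depth `k` (shortest distance from `Q` in
the deletion dependency graph) has arity at most `k`. -/
theorem deletion_depth_arity (Raux : Type) (ar : Raux → ℕ)
    (P : CQDelProg Raux ar) (Q : Raux) (hQ : ar Q = 0)
    (hnorep : ∀ (R : Raux) (a : CQAtom Raux ar (ar R + 1)),
      a ∈ P.delFormula R → Function.Injective a.ι)
    (R : Raux) (k : ℕ)
    (hreach : Reaches P Q k R)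
    (hmin : ∀ j < k, ¬ Reaches P Q j R) :
    ar R ≤ k := by
  clear hmin
  induction hreach with
  | zero => simp [hQ]
  | succ hr hedge ih =>
    obtain ⟨a, ha, rfl⟩ := hedge
    have hinj := hnorep _ a ha
    have := Fintype.card_le_of_injective a.ι hinj
    simpa using this.trans (by simpa using Nat.add_le_add_right ih 1)
end

section
/- Consider a conjunctive quantifier-free dynamic program (all update formulas are conjunctions of atoms, no variable repeated within an atom) purportedly maintaining the query 'U ≠ ∅' under element deletions. Then for every relation symbol R of deletion depth k and every state S in which U contains at least k+1 elements and which is reachable correctly, R must contain every diverse k'-tuple over U (where k' ≤ k is the arity of R), i.e., every tuple of pairwise distinct elements of U. -/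
/-- A state: the unary input relation `U` and the auxiliary database. -/
structure CState (X : Type) (Raux : Type) (ar : Raux → ℕ) where
  U : Set X
  aux : ∀ R, (Fin (ar R) → X) → Prop

/-- Deleting the element `a` from `U`: each auxiliary relation is recomputed by its
conjunctive update formula, evaluated in the old state with `a` as the parameter `u`. -/
def stepDel {X Raux : Type} {ar : Raux → ℕ} (P : CQDelProg Raux ar)
    (st : CState X Raux ar) (a : X) : CState X Raux ar where
  U := st.U \ {a}
  aux R w := ∀ at' ∈ P.delFormula R, st.aux at'.sym (fun i => (Fin.cons a w : Fin (ar R + 1) → X) (at'.ι i))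

/-- Running a sequence of deletions. -/
def runDel {X Raux : Type} {ar : Raux → ℕ} (P : CQDelProg Raux ar)
    (st : CState X Raux ar) (ds : List X) : CState X Raux ar :=
  ds.foldl (stepDel P) st

/-- The value of the (0-ary) query relation `Q`. -/
def Qholds {X Raux : Type} {ar : Raux → ℕ} (Q : Raux) (st : CState X Raux ar) : Prop :=
  ∀ w : Fin (ar Q) → X, st.aux Q w

/-!
Induct along a path `Q = R₀ → ⋯ → R_k = R` of the deletion dependency graph, for all correctly
maintained states at once. For `k = 0`, `Q` holds because `U ≠ ∅`. For an edge `R → R'` given by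
an atom `R'(ι)` of the update formula of `R`, extend a diverse tuple `w` for `R'` to a diverse
tuple `g = (u, v)` over `U` with `g ∘ ι = w`; this needs `|U| ≥ ar R + 1`, which holds since
`ar R ≤ k` (atoms repeat no variable and `ar Q = 0`). Deleting `u` leaves a correctly maintained
state with at least `k + 1` elements over which `v` is diverse, so `R(v)` holds there by
induction; since the new `R` is the update formula of `R` evaluated at `(u, v)` in the old state,
`R'(w)` held before the deletion.
-/

open Function Set

theorem Function.Injective.exists_injective_extend_range_subset {α β γ : Type*} [Finite β]
    {ι : α → β} (hι : Injective ι) {w : α → γ} (hw : Injective w) {U : Set γ}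
    (hwU : range w ⊆ U) (hcard : ENat.card β ≤ U.encard) :
    ∃ g : β → γ, Injective g ∧ range g ⊆ U ∧ g ∘ ι = w := by
  -- `exists_injOn_of_encard_le` below needs a nonempty codomain.
  obtain hγ | hγ := isEmpty_or_nonempty γ
  · have : IsEmpty β := by
      rwa [U.eq_empty_of_isEmpty, encard_empty, nonpos_iff_eq_zero,
        ENat.card_eq_zero_iff_empty] at hcard
    exact ⟨isEmptyElim, fun b => isEmptyElim b, fun _ ⟨b, _⟩ => isEmptyElim b,
      funext fun a => isEmptyElim (ι a)⟩
  have : Finite α := Finite.of_injective ι hι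
  have hfree : (range ι)ᶜ.encard ≤ (U \ range w).encard := by
    have hβ := encard_add_encard_compl (range ι)
    rw [encard_univ, encard_congr ((Equiv.ofInjective ι hι).symm.trans (Equiv.ofInjective w hw)),
      add_comm] at hβ
    rw [← ENat.add_le_add_iff_right (finite_range w).encard_lt_top.ne, hβ,
      encard_sdiff_add_encard_of_subset hwU]
    exact hcard
  obtain ⟨f, hfU, hf⟩ := (toFinite _).exists_injOn_of_encard_le hfree
  have hfree_eq : EqOn (extend ι w f) f (range ι)ᶜ := fun b hb =>
    extend_apply' _ _ _ fun ⟨a, ha⟩ => hb ⟨a, ha⟩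
  refine ⟨extend ι w f, ?_, ?_, Function.extend_comp hι w f⟩
  · rw [← injOn_univ, ← union_compl_self (range ι), injOn_union disjoint_compl_right]
    refine ⟨hι.extend_injOn hw, hf.congr hfree_eq.symm, ?_⟩
    rintro _ ⟨a, rfl⟩ b hb h
    rw [hι.extend_apply, hfree_eq hb] at h
    exact (hfU hb).2 ⟨a, h⟩
  · rw [range_extend hι]
    exact union_subset hwU ((image_subset_iff.2 hfU).trans sdiff_subset)

section

variable {X Raux : Type} {ar : Raux → ℕ}

def CQDelProg.NoRepeat (P : CQDelProg Raux ar) : Prop :=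
  ∀ (R : Raux) (a : CQAtom Raux ar (ar R + 1)), a ∈ P.delFormula R → Injective a.ι

def CQDelProg.MaintainsNonempty (P : CQDelProg Raux ar) (Q : Raux) (st : CState X Raux ar) : Prop :=
  ∀ ds : List X, ds.Nodup → (∀ x ∈ ds, x ∈ st.U) →
    (Qholds Q (runDel P st ds) ↔ (runDel P st ds).U.Nonempty)

variable {P : CQDelProg Raux ar} {Q R R' : Raux} {st : CState X Raux ar}

theorem CQDelProg.MaintainsNonempty.qholds (h : P.MaintainsNonempty Q st) (hU : st.U.Nonempty) :
    Qholds Q st :=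
  (h [] List.nodup_nil (by simp)).2 hU

theorem CQDelProg.MaintainsNonempty.stepDel (h : P.MaintainsNonempty Q st) {u : X} (hu : u ∈ st.U) :
    P.MaintainsNonempty Q (stepDel P st u) := fun ds hds hdsU =>
  -- `runDel P (stepDel P st u) ds` unfolds to `runDel P st (u :: ds)`.
  h (u :: ds) (List.nodup_cons.2 ⟨fun hu' => (hdsU u hu').2 rfl, hds⟩)
    (List.forall_mem_cons.2 ⟨hu, fun x hx => (hdsU x hx).1⟩)

theorem DelEdge.ar_le (hP : P.NoRepeat) (h : DelEdge P R R') : ar R' ≤ ar R + 1 := by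
  obtain ⟨a, ha, rfl⟩ := h
  simpa using Fintype.card_le_of_injective _ (hP R a ha)

theorem Reaches.ar_le (hP : P.NoRepeat) (hQ : ar Q = 0) {k : ℕ} (h : Reaches P Q k R) :
    ar R ≤ k := by
  induction h with
  | zero => exact hQ.le
  | succ _ hRR' ih => exact (hRR'.ar_le hP).trans (by omega)

theorem Reaches.aux_of_injective (hP : P.NoRepeat) (hQ : ar Q = 0) {k : ℕ}
    (h : Reaches P Q k R) (hst : P.MaintainsNonempty Q st) (hU : (k + 1 : ℕ∞) ≤ st.U.encard)
    {w : Fin (ar R) → X} (hw : Injective w) (hwU : range w ⊆ st.U) : st.aux R w := by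
  induction h generalizing st with
  | zero => exact hst.qholds (one_le_encard_iff_nonempty.1 (by simpa using hU)) w
  | @succ k R R' hR hRR' ih =>
    obtain ⟨a, ha, rfl⟩ := hRR'
    have hcard : ENat.card (Fin (ar R + 1)) ≤ st.U.encard := by
      have hRk := hR.ar_le hP hQ
      refine le_trans ?_ hU
      simp only [ENat.card_eq_coe_fintype_card, Fintype.card_fin]
      exact_mod_cast (by omega : ar R + 1 ≤ k + 1 + 1)
    obtain ⟨g, hg, hgU, hgw⟩ := (hP R a ha).exists_injective_extend_range_subset hw hwU hcard
    have hg0 : g 0 ∈ st.U := hgU ⟨0, rfl⟩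
    have hU' : (k + 1 : ℕ∞) ≤ (stepDel P st (g 0)).U.encard := by
      rwa [← ENat.add_le_add_iff_right ENat.one_ne_top, stepDel, encard_sdiff_singleton_add_one hg0]
    have htail : range (Fin.tail g) ⊆ (stepDel P st (g 0)).U := by
      rintro _ ⟨i, rfl⟩
      exact ⟨hgU ⟨_, rfl⟩, fun h => Fin.succ_ne_zero i (hg h)⟩
    have := ih (hst.stepDel hg0) hU' (w := Fin.tail g) (hg.comp (Fin.succ_injective _)) htail a ha
    rwa [Fin.cons_self_tail, ← comp_def, hgw] at this

end

/-- **Key inductive invariant.** Suppose the conjunctive quantifier-free program `P`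
(no variable repeated within an atom) correctly maintains the query "`U` is nonempty"
from the state `st` under all honest deletion sequences. Then for every auxiliary
relation symbol `R` of deletion depth (at most) `k`, if `U` contains at least `k + 1`
elements, `R` contains every diverse tuple over `U`. -/
theorem cq_diverse_invariant (X Raux : Type) (ar : Raux → ℕ)
    (P : CQDelProg Raux ar) (Q : Raux) (hQ : ar Q = 0)
    (hnorep : ∀ (R : Raux) (a : CQAtom Raux ar (ar R + 1)),
      a ∈ P.delFormula R → Function.Injective a.ι)
    (st : CState X Raux ar)
    (hcorrect : ∀ ds : List X, ds.Nodup → (∀ x ∈ ds, x ∈ st.U) →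
      (Qholds Q (runDel P st ds) ↔ (runDel P st ds).U.Nonempty))
    (R : Raux) (k : ℕ) (hreach : Reaches P Q k R)
    (hbig : ∃ T : Finset X, ↑T ⊆ st.U ∧ T.card = k + 1) :
    ∀ w : Fin (ar R) → X, Function.Injective w → (∀ i, w i ∈ st.U) →
      st.aux R w := by
  intro w hw hwU
  obtain ⟨T, hTU, hT⟩ := hbig
  have hU : (k + 1 : ℕ∞) ≤ st.U.encard := calc
    (k + 1 : ℕ∞) = (T : Set X).encard := by simp [hT]
    _ ≤ st.U.encard := encard_le_encard hTU
  exact hreach.aux_of_injective hnorep hQ hcorrect hU hw (range_subset_iff.2 hwU)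
end

section
/- If the number of distinct atomic types (up to a fixed maximal arity m determined by the signature) is n, then among any n+1 structures S_1, ..., S_{n+1} over a common finite relational signature with constants s, t, where in each S_i all diverse l-tuples (l ≤ m) of non-constant elements have the same atomic type, there exist indices k < l such that the type assignments of S_k and S_l coincide; consequently S_k is isomorphic to the substructure of S_l induced by any subset of equal cardinality containing the constants. -/
/-- Two `l`-tuples (the first in the structure `interp1`, the second in `interp2`,
over a common relational signature) have the same atomic type: they satisfy the same
equalities and the same relational atoms. -/
def SameType2 {X R : Type} (ar : R → ℕ)
    (interp1 interp2 : ∀ r, (Fin (ar r) → X) → Prop)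
    {l : ℕ} (v w : Fin l → X) : Prop :=
  (∀ i j, v i = v j ↔ w i = w j) ∧
  ∀ (r : R) (ι : Fin (ar r) → Fin l), (interp1 r (v ∘ ι) ↔ interp2 r (w ∘ ι))

lemma append_pair_injective {X : Type} {l : ℕ} {v : Fin l → X} {s t : X}
    (hv : Function.Injective v) (hvs : ∀ j, v j ≠ s) (hvt : ∀ j, v j ≠ t)
    (hst : s ≠ t) : Function.Injective (Fin.append v ![s, t]) := by
  have key : ∀ x y : Fin (l + 2), Fin.append v ![s, t] x = Fin.append v ![s, t] y → x = y := by
    refine Fin.addCases (fun i => ?_) (fun i => ?_) <;>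
      refine Fin.addCases (fun j => ?_) (fun j => ?_) <;>
        intro h <;> simp only [Fin.append_left, Fin.append_right] at h
    · exact congrArg _ (hv h)
    · exfalso
      fin_cases j
      · exact hvs i (by simpa using h)
      · exact hvt i (by simpa using h)
    · exfalso
      fin_cases i
      · exact hvs j (by simpa using h.symm)
      · exact hvt j (by simpa using h.symm)
    · congr 1
      fin_cases i <;> fin_cases j <;> simp_all
  exact key

/-- **Pigeonhole on homogeneous structures.** Let `n` be the number of atomic-type
assignments up to the maximal arity `m` of the finite relational signature, in the
presence of the two constants `s`, `t`. Given `n + 1` structures `S_i` over the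
signature, each with domain `{s, t} ∪ A_i` (with `A_i` of size at least `m`) in which
all diverse `l`-tuples (`l ≤ m`) of non-constant elements have the same atomic type
(taken with `s`, `t` appended), there are indices `k < l` whose type assignments
coincide — all diverse tuples over `A_k` in `S_k` have the same atomic type as diverse
tuples over `A_l` in `S_l` — and consequently `S_k` is isomorphic to the substructure
of `S_l` induced by any subset of equal cardinality together with the constants. -/
theorem pigeonhole_homogeneous_structures
    (R : Type) [Fintype R] [DecidableEq R] (ar : R → ℕ) (m : ℕ) (har : ∀ r, ar r ≤ m)
    (X : Type) (s t : X) (hst : s ≠ t)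
    (n : ℕ)
    (hn : n = Fintype.card
      ((l : Fin (m + 1)) → ((r : R) × (Fin (ar r) → Fin (l.1 + 2))) → Bool))
    (A : Fin (n + 1) → Finset X)
    (hA : ∀ i, m ≤ (A i).card)
    (hs : ∀ i, s ∉ A i) (ht : ∀ i, t ∉ A i)
    (interp : Fin (n + 1) → ∀ r : R, (Fin (ar r) → X) → Prop)
    (hhom : ∀ i, ∀ l ≤ m, ∀ v w : Fin l → X,
      Function.Injective v → Function.Injective w →
      (∀ j, v j ∈ A i) → (∀ j, w j ∈ A i) →
      SameType2 ar (interp i) (interp i) (Fin.append v ![s, t]) (Fin.append w ![s, t])) :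
    ∃ k l : Fin (n + 1), k < l ∧
      (∀ l' ≤ m, ∀ v w : Fin l' → X,
        Function.Injective v → Function.Injective w →
        (∀ j, v j ∈ A k) → (∀ j, w j ∈ A l) →
        SameType2 ar (interp k) (interp l)
          (Fin.append v ![s, t]) (Fin.append w ![s, t])) ∧
      (∀ (B : Finset X) (π : X → X), ↑B ⊆ (↑(A l) : Set X) → B.card = (A k).card →
        Set.BijOn π ↑(A k) ↑B → π s = s → π t = t →
        ∀ (r : R) (v : Fin (ar r) → X),
          (∀ j, v j ∈ (↑(A k) : Set X) ∪ {s, t}) →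
          (interp k r v ↔ interp l r (π ∘ v))) := by
  classical
  -- canonical tuples
  have hcard : ∀ (i : Fin (n + 1)) (l : ℕ), l ≤ m → l ≤ (A i).card :=
    fun i l hl => hl.trans (hA i)
  set c : ∀ (i : Fin (n + 1)) (l : Fin (m + 1)), Fin l.1 → X :=
    fun i l j =>
      ((A i).equivFin.symm (Fin.castLE (hcard i l.1 (Nat.lt_succ_iff.mp l.2)) j) : X)
    with hc
  have hcmem : ∀ i l j, c i l j ∈ A i := fun i l j => Finset.coe_mem _
  have hcinj : ∀ i l, Function.Injective (c i l) := by
    intro i l a b h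
    exact Fin.castLE_injective _
      ((A i).equivFin.symm.injective (Subtype.val_injective h))
  -- type assignment
  set T : Fin (n + 1) →
      ((l : Fin (m + 1)) → ((r : R) × (Fin (ar r) → Fin (l.1 + 2))) → Bool) :=
    fun i l p => decide (interp i p.1 (Fin.append (c i l) ![s, t] ∘ p.2)) with hT
  obtain ⟨a, b, hab, hTab⟩ :=
    Fintype.exists_ne_map_eq_of_card_lt T (by simp [← hn])
  -- the key claim
  have key : ∀ (k l : Fin (n + 1)), T k = T l →
      ∀ l' ≤ m, ∀ v w : Fin l' → X,
        Function.Injective v → Function.Injective w →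
        (∀ j, v j ∈ A k) → (∀ j, w j ∈ A l) →
        SameType2 ar (interp k) (interp l)
          (Fin.append v ![s, t]) (Fin.append w ![s, t]) := by
    intro k l hkl l' hl' v w hv hw hvA hwA
    have hvinj : Function.Injective (Fin.append v ![s, t]) :=
      append_pair_injective hv (fun j e => hs k (e ▸ hvA j)) (fun j e => ht k (e ▸ hvA j)) hst
    have hwinj : Function.Injective (Fin.append w ![s, t]) :=
      append_pair_injective hw (fun j e => hs l (e ▸ hwA j)) (fun j e => ht l (e ▸ hwA j)) hst
    constructor
    · intro i j
      exact hvinj.eq_iff.trans hwinj.eq_iff.symm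
    · intro r ι
      set lf : Fin (m + 1) := ⟨l', Nat.lt_succ_of_le hl'⟩ with hlf
      have h1 := (hhom k l' hl' v (c k lf) hv (hcinj k lf) hvA (hcmem k lf)).2 r ι
      have h3 := (hhom l l' hl' (c l lf) w (hcinj l lf) hw (hcmem l lf) hwA).2 r ι
      have h2 : interp k r (Fin.append (c k lf) ![s, t] ∘ ι) ↔
          interp l r (Fin.append (c l lf) ![s, t] ∘ ι) := by
        have := congrFun (congrFun hkl lf) ⟨r, ι⟩
        simpa [hT] using this
      exact (h1.trans h2).trans h3
  -- order the two indices
  obtain ⟨k, l, hkl, hTkl⟩ : ∃ k l : Fin (n + 1), k < l ∧ T k = T l := by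
    rcases lt_or_gt_of_ne hab with h | h
    · exact ⟨a, b, h, hTab⟩
    · exact ⟨b, a, h, hTab.symm⟩
  refine ⟨k, l, hkl, key k l hTkl, ?_⟩
  intro B π hB hBcard hbij hπs hπt r v hv
  set F : Finset X := (Finset.image v Finset.univ) ∩ A k with hF
  have hFA : ∀ x ∈ F, x ∈ A k := fun x hx => (Finset.mem_inter.mp hx).2
  have hFm : F.card ≤ m := by
    calc F.card ≤ (Finset.image v Finset.univ).card :=
          Finset.card_le_card Finset.inter_subset_left
      _ ≤ (Finset.univ : Finset (Fin (ar r))).card := Finset.card_image_le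
      _ = ar r := by simp
      _ ≤ m := har r
  set u : Fin F.card → X := fun j => (F.equivFin.symm j : X) with hu
  have huinj : Function.Injective u := by
    intro a b h
    exact F.equivFin.symm.injective (Subtype.val_injective h)
  have huF : ∀ j, u j ∈ F := fun j => Finset.coe_mem _
  have huA : ∀ j, u j ∈ A k := fun j => hFA _ (huF j)
  set πu : Fin F.card → X := π ∘ u with hπu
  have hπuinj : Function.Injective πu := by
    intro a b h
    exact huinj (hbij.injOn (huA a) (huA b) h)
  have hπuA : ∀ j, πu j ∈ A l := fun j => hB (hbij.mapsTo (huA j))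
  set ι : Fin (ar r) → Fin (F.card + 2) := fun j =>
    if h : v j ∈ F then Fin.castAdd 2 (F.equivFin ⟨v j, h⟩)
    else if v j = s then Fin.natAdd F.card 0 else Fin.natAdd F.card 1 with hι
  have hveq : Fin.append u ![s, t] ∘ ι = v := by
    funext j
    by_cases h : v j ∈ F
    · simp [hι, h, Fin.append_left, hu]
    · have hvj : v j = s ∨ v j = t := by
        rcases hv j with h' | h'
        · exact absurd (Finset.mem_inter.mpr
            ⟨Finset.mem_image_of_mem v (Finset.mem_univ j), h'⟩) h
        · simpa using h'
      rcases hvj with h' | h'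
      · show Fin.append u ![s, t] (ι j) = v j
        rw [hι]
        simp only []
        rw [dif_neg h, if_pos h', h']
        simp [Fin.append_right]
      · have hns : ¬ v j = s := fun e => hst (e ▸ h')
        show Fin.append u ![s, t] (ι j) = v j
        rw [hι]
        simp only []
        rw [dif_neg h, if_neg hns, h']
        simp [Fin.append_right]
  have hπstep : ∀ x : Fin (F.card + 2),
      Fin.append πu ![s, t] x = π (Fin.append u ![s, t] x) := by
    refine Fin.addCases (fun i => ?_) (fun i => ?_)
    · simp [Fin.append_left, hπu]
    · fin_cases i <;> simp [Fin.append_right, hπs, hπt]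
  have hπeq : Fin.append πu ![s, t] ∘ ι = π ∘ v := by
    funext j
    simp only [Function.comp_apply, hπstep]
    exact congrArg π (congrFun hveq j)
  have := (key k l hTkl F.card hFm u πu huinj hπuinj huA hπuA).2 r ι
  rw [hveq, hπeq] at this
  exact this
end
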